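/- Let T be a non-singular measurable transformation with Radon–Nikodym derivative f₀, let Φ₁, Φ₂ ∈ Δ' be Young functions such that Φ₂∘Φ₁⁻¹ is a Young function, and let X = (⋃ₙ Aₙ) ∪ B be the atomic decomposition. If (i) f₀ = 0 μ-a.e. on B and (ii) sup_n Φ₂(1/Φ₁⁻¹(μ(Aₙ)))·f₀(Aₙ)·μ(Aₙ) < ∞, then C_T f = f∘T defines a bounded composition operator from L^{Φ₁}(Σ) into L^{Φ₂}(Σ). -/

import Mathlib

open MeasureTheory Filter Topology

/-- A Young function: continuous, convex, even, vanishing exactly at 0,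
with superlinear growth at infinity. -/
structure YoungFunction where
  toFun : ℝ → ℝ
  continuous' : Continuous toFun
  convexOn' : ConvexOn ℝ Set.univ toFun
  even' : ∀ x, toFun (-x) = toFun x
  zero_iff' : ∀ x, toFun x = 0 ↔ x = 0
  tendsto_atTop' : Tendsto (fun x => toFun x / x) atTop atTop

instance : CoeFun YoungFunction fun _ => ℝ → ℝ := ⟨YoungFunction.toFun⟩

variable {X : Type*} [MeasurableSpace X]

/-- Membership in the Orlicz space `L^Φ(μ)`. -/
def MemOrlicz (Φ : YoungFunction) (μ : Measure X) (f : X → ℝ) : Prop :=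
  AEStronglyMeasurable f μ ∧ ∃ k > 0, Integrable (fun x => Φ (k * f x)) μ

/-- The Luxemburg norm on the Orlicz space `L^Φ(μ)`. -/
noncomputable def luxNorm (Φ : YoungFunction) (μ : Measure X) (f : X → ℝ) : ℝ :=
  sInf {k : ℝ | 0 < k ∧ ∫ x, Φ (f x / k) ∂μ ≤ 1}

/-- The generalized (right) inverse of a Young function on `[0,∞)`. -/
noncomputable def yInv (Φ : YoungFunction) (y : ℝ) : ℝ :=
  sSup {x : ℝ | 0 ≤ x ∧ Φ x ≤ y}

/-- `Φ` satisfies the `Δ₂` condition globally. -/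
def YoungDeltaTwo (Φ : YoungFunction) : Prop :=
  ∃ k > 0, ∀ x : ℝ, 0 ≤ x → Φ (2 * x) ≤ k * Φ x

/-- `Φ` satisfies the `Δ'` condition globally, with constant `c`. -/
def YoungDeltaPrime (Φ : YoungFunction) (c : ℝ) : Prop :=
  0 < c ∧ ∀ x y : ℝ, 0 ≤ x → 0 ≤ y → Φ (x * y) ≤ c * Φ x * Φ y

/-- `Φ` satisfies the `∇'` condition globally, with constant `b`. -/
def YoungNablaPrime (Φ : YoungFunction) (b : ℝ) : Prop :=
  0 < b ∧ ∀ x y : ℝ, 0 ≤ x → 0 ≤ y → Φ x * Φ y ≤ Φ (b * x * y)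

/-- `Φ ≺ Ψ` : `Φ` is weaker than `Ψ`. -/
def YoungWeaker (Φ Ψ : YoungFunction) : Prop :=
  ∃ a > 0, ∃ x₀ : ℝ, 0 ≤ x₀ ∧ ∀ x : ℝ, x₀ ≤ x → Φ x ≤ Ψ (a * x)

/-- `A` is an atom of the measure `μ`. -/
def IsAtomSet (μ : Measure X) (A : Set X) : Prop :=
  MeasurableSet A ∧ 0 < μ A ∧
    ∀ B : Set X, MeasurableSet B → B ⊆ A → μ B = 0 ∨ μ B = μ A

/-- `μ` is non-atomic on the set `S`. -/
def NonAtomicOn (μ : Measure X) (S : Set X) : Prop :=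
  ∀ A : Set X, A ⊆ S → ¬ IsAtomSet μ A

/-- A linear map between Orlicz spaces (given as a map on functions) is bounded. -/
def OrliczBounded (Φ₁ Φ₂ : YoungFunction) (μ : Measure X)
    (Tmap : (X → ℝ) → (X → ℝ)) : Prop :=
  ∃ C > 0, ∀ f : X → ℝ, MemOrlicz Φ₁ μ f →
    MemOrlicz Φ₂ μ (Tmap f) ∧ luxNorm Φ₂ μ (Tmap f) ≤ C * luxNorm Φ₁ μ f

/-- The atomic decomposition of a σ-finite measure space: `X = (⋃ n, A n) ∪ B`
with the `A n` pairwise disjoint atoms of finite measure and `B` non-atomic. -/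
def AtomicDecomposition (μ : Measure X) (A : ℕ → Set X) (B : Set X) : Prop :=
  (∀ n, IsAtomSet μ (A n)) ∧ (∀ n, μ (A n) < ⊤) ∧
    Pairwise (Function.onFun Disjoint A) ∧ (∀ n, Disjoint (A n) B) ∧
    MeasurableSet B ∧ NonAtomicOn μ B ∧ (⋃ n, A n) ∪ B = Set.univ

/-!
By the change of variables, `∫ Φ₂(g ∘ T / K) dμ = ∫ f₀ Φ₂(g / K) dμ`, and as `f₀ = 0` on the
non-atomic part `B` this is a sum over the atoms, on each of which `|g|` and `f₀` are a.e. constant,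
say `a` and `c`; write `m = μ(Aₙ)`. If `∫ Φ₁(g) dμ ≤ 1` then `t = Φ₁(a) m ≤ 1`, and with
`b = Φ₁⁻¹(m)` the two `Δ'` conditions and `Ψ = Φ₂ ∘ Φ₁⁻¹` give
`Φ₂(a) ≤ c₂ Φ₂(1/b) Φ₂(b a) = c₂ Φ₂(1/b) Ψ(Φ₁(b a)) ≤ c₂ Φ₂(1/b) Ψ(c₁ t) ≤ c₂ Ψ(c₁) Φ₂(1/b) t`.
Hence for `K ≥ max (c₂ Ψ(c₁) M) 1`, with `M` the supremum in the hypothesis, the atom's term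
`c Φ₂(a / K) m` is at most its term `Φ₁(a) m` in `∫ Φ₁(g) dμ`, so `∫ Φ₂(g ∘ T / K) dμ ≤ 1`.
Applied to `g = f / k` this gives `‖f ∘ T‖_{Φ₂} ≤ K ‖f‖_{Φ₁}`.
-/

open scoped ENNReal

namespace YoungFunction

variable (Φ : YoungFunction)

lemma map_zero : Φ 0 = 0 := (Φ.zero_iff' 0).mpr rfl

lemma map_mul_le_of_le_one {t : ℝ} (ht₀ : 0 ≤ t) (ht₁ : t ≤ 1) (s : ℝ) :
    Φ (t * s) ≤ t * Φ s := by
  simpa [Φ.map_zero] using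
    Φ.convexOn'.2 (Set.mem_univ s) (Set.mem_univ 0) ht₀ (sub_nonneg.mpr ht₁) (by ring)

lemma nonneg (x : ℝ) : 0 ≤ Φ x := by
  have h := Φ.convexOn'.2 (Set.mem_univ x) (Set.mem_univ (-x)) (by norm_num : (0 : ℝ) ≤ 1 / 2)
    (by norm_num : (0 : ℝ) ≤ 1 / 2) (by norm_num)
  simp only [smul_eq_mul, Φ.even'] at h
  have hmid : (1 / 2 : ℝ) * x + 1 / 2 * -x = 0 := by ring
  rw [hmid, Φ.map_zero] at h
  linarith

lemma pos {x : ℝ} (hx : x ≠ 0) : 0 < Φ x :=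
  (Φ.nonneg x).lt_of_ne fun h => hx ((Φ.zero_iff' x).mp h.symm)

lemma map_abs (x : ℝ) : Φ |x| = Φ x := by
  rcases abs_cases x with ⟨h, _⟩ | ⟨h, _⟩ <;> simp only [h, Φ.even']

lemma strictMonoOn : StrictMonoOn Φ (Set.Ici 0) := by
  intro x (hx : 0 ≤ x) y _ hxy
  have hy : 0 < y := hx.trans_lt hxy
  calc Φ x = Φ (x / y * y) := by rw [div_mul_cancel₀ _ hy.ne']
    _ ≤ x / y * Φ y :=
        Φ.map_mul_le_of_le_one (div_nonneg hx hy.le) (div_le_one_of_le₀ hxy.le hy.le) y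
    _ < 1 * Φ y := mul_lt_mul_of_pos_right ((div_lt_one hy).mpr hxy) (Φ.pos hy.ne')
    _ = Φ y := one_mul _

lemma map_le_map {x y : ℝ} (hx : 0 ≤ x) (hxy : x ≤ y) : Φ x ≤ Φ y :=
  Φ.strictMonoOn.monotoneOn hx (hx.trans hxy : 0 ≤ y) hxy

lemma tendsto_atTop : Tendsto Φ atTop atTop := by
  refine tendsto_atTop_mono' atTop ?_ Φ.tendsto_atTop'
  filter_upwards [eventually_ge_atTop (1 : ℝ)] with x hx
  rw [div_le_iff₀ (by linarith)]
  nlinarith [Φ.nonneg x]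

lemma exists_nonneg_map_eq {y : ℝ} (hy : 0 ≤ y) : ∃ x, 0 ≤ x ∧ Φ x = y := by
  obtain ⟨R, hR⟩ := eventually_atTop.mp (Φ.tendsto_atTop.eventually_ge_atTop y)
  obtain ⟨x, hx, hΦx⟩ := intermediate_value_Icc (le_max_right R 0) Φ.continuous'.continuousOn
    ⟨Φ.map_zero.symm ▸ hy, hR _ (le_max_left R 0)⟩
  exact ⟨x, hx.1, hΦx⟩

lemma yInv_map {u : ℝ} (hu : 0 ≤ u) : yInv Φ (Φ u) = u := by
  have hset : {x : ℝ | 0 ≤ x ∧ Φ x ≤ Φ u} = Set.Icc 0 u := by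
    ext x
    exact and_congr_right fun hx => Φ.strictMonoOn.le_iff_le hx hu
  rw [yInv, hset, csSup_Icc hu]

lemma map_yInv {y : ℝ} (hy : 0 ≤ y) : Φ (yInv Φ y) = y := by
  obtain ⟨u, hu, rfl⟩ := Φ.exists_nonneg_map_eq hy
  rw [Φ.yInv_map hu]

lemma yInv_nonneg {y : ℝ} (hy : 0 ≤ y) : 0 ≤ yInv Φ y := by
  obtain ⟨u, hu, rfl⟩ := Φ.exists_nonneg_map_eq hy
  rwa [Φ.yInv_map hu]

end YoungFunction

lemma nonneg_of_ae_eq_const {μ : Measure X} (hμ : μ ≠ 0) {h : X → ℝ} (hh : ∀ᵐ x ∂μ, 0 ≤ h x)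
    {c : ℝ} (hc : ∀ᵐ x ∂μ, h x = c) : 0 ≤ c := by
  have := ae_neBot.mpr hμ
  obtain ⟨x, hx, rfl⟩ := (hh.and hc).exists
  exact hx

namespace IsAtomSet

variable {μ : Measure X} {A : Set X}

lemma ae_mem_or_ae_notMem (hA : IsAtomSet μ A) (hfin : μ A ≠ ⊤) {S : Set X}
    (hS : MeasurableSet S) : (∀ᵐ x ∂μ.restrict A, x ∈ S) ∨ ∀ᵐ x ∂μ.restrict A, x ∉ S := by
  rw [ae_restrict_iff' hA.1, ae_restrict_iff' hA.1]
  rcases hA.2.2 (S ∩ A) (hS.inter hA.1) Set.inter_subset_right with h | h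
  · right
    rw [ae_iff]
    simpa [Set.inter_comm] using h
  · left
    have hdiff : {x | ¬(x ∈ A → x ∈ S)} = A \ (S ∩ A) := by ext; simp
    rw [ae_iff, hdiff, measure_sdiff Set.inter_subset_right (hS.inter hA.1).nullMeasurableSet
      (h ▸ hfin), h, tsub_self]

lemma exists_ae_eq_const {β : Type*} [MeasurableSpace β] [Nonempty β]
    [MeasurableSpace.CountablySeparated β] (hA : IsAtomSet μ A) (hfin : μ A ≠ ⊤) {g : X → β}
    (hg : Measurable g) : ∃ b, ∀ᵐ x ∂μ.restrict A, g x = b :=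
  exists_eventuallyEq_const_of_forall_separating MeasurableSet fun _ hU =>
    hA.ae_mem_or_ae_notMem hfin (hg hU)

end IsAtomSet

namespace AtomicDecomposition

variable {μ : Measure X} {A : ℕ → Set X} {B : Set X}

lemma setLIntegral_iUnion_eq_tsum (hdec : AtomicDecomposition μ A B) {F : X → ℝ≥0∞}
    {d : ℕ → ℝ≥0∞} (hd : ∀ n, ∀ᵐ x ∂μ.restrict (A n), F x = d n) :
    ∫⁻ x in ⋃ n, A n, F x ∂μ = ∑' n, d n * μ (A n) := by
  obtain ⟨hatom, -, hdisj, -⟩ := hdec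
  rw [lintegral_iUnion (fun n => (hatom n).1) hdisj]
  refine tsum_congr fun n => ?_
  rw [lintegral_congr_ae (hd n), lintegral_const, Measure.restrict_apply_univ]

lemma lintegral_eq_setLIntegral_iUnion (hdec : AtomicDecomposition μ A B) {F : X → ℝ≥0∞}
    (hF : ∀ᵐ x ∂μ.restrict B, F x = 0) : ∫⁻ x, F x ∂μ = ∫⁻ x in ⋃ n, A n, F x ∂μ := by
  obtain ⟨hatom, -, -, -, -, -, hcover⟩ := hdec
  have hcompl : (⋃ n, A n)ᶜ ⊆ B := by
    rw [Set.compl_subset_iff_union, hcover]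
  rw [← lintegral_add_compl F (MeasurableSet.iUnion fun n => (hatom n).1),
    lintegral_congr_ae (ae_restrict_of_ae_restrict_of_subset hcompl hF), lintegral_zero, add_zero]

lemma lintegral_comp_eq_tsum (hdec : AtomicDecomposition μ A B) {T : X → X}
    (hT : Measurable T) {f₀ : X → ℝ} (hmap : μ.map T = μ.withDensity fun x => ENNReal.ofReal (f₀ x))
    (hf₀m : Measurable f₀) {c₀ : ℕ → ℝ} (hc₀ : ∀ n, ∀ᵐ x ∂μ.restrict (A n), f₀ x = c₀ n)
    (hB : ∀ᵐ x ∂μ.restrict B, f₀ x = 0) {F : X → ℝ≥0∞} (hF : Measurable F) {d : ℕ → ℝ≥0∞}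
    (hd : ∀ n, ∀ᵐ x ∂μ.restrict (A n), F x = d n) :
    ∫⁻ x, F (T x) ∂μ = ∑' n, ENNReal.ofReal (c₀ n) * d n * μ (A n) := by
  rw [← lintegral_map hF hT, hmap, lintegral_withDensity_eq_lintegral_mul _ hf₀m.ennreal_ofReal hF,
    hdec.lintegral_eq_setLIntegral_iUnion (hB.mono fun x hx => by simp [hx])]
  exact hdec.setLIntegral_iUnion_eq_tsum fun n =>
    ((hc₀ n).and (hd n)).mono fun x ⟨hf₀x, hFx⟩ => by simp only [Pi.mul_apply, hf₀x, hFx]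

end AtomicDecomposition

section DeltaPrime

variable {Φ₁ Φ₂ Ψ : YoungFunction} {c₁ c₂ : ℝ}

lemma map_le_of_deltaPrime_of_comp (hΔ₁ : YoungDeltaPrime Φ₁ c₁)
    (hΔ₂ : YoungDeltaPrime Φ₂ c₂) (hΨ : ∀ x, 0 ≤ x → Ψ x = Φ₂ (yInv Φ₁ x)) {a m : ℝ}
    (ha : 0 ≤ a) (hm : 0 < m) (hmod : Φ₁ a * m ≤ 1) :
    Φ₂ a ≤ c₂ * Ψ c₁ * Φ₂ (1 / yInv Φ₁ m) * (Φ₁ a * m) := by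
  set b := yInv Φ₁ m
  have hb : 0 ≤ b := Φ₁.yInv_nonneg hm.le
  have hΦb : Φ₁ b = m := Φ₁.map_yInv hm.le
  have hb₀ : b ≠ 0 := fun h => hm.ne' (by rw [← hΦb, h, Φ₁.map_zero])
  have hba : 0 ≤ b * a := mul_nonneg hb ha
  have hΦba : Φ₁ (b * a) ≤ c₁ * (Φ₁ a * m) := by
    have := hΔ₁.2 b a hb ha
    rw [hΦb] at this
    linarith
  have hΦ₂ba : Φ₂ (b * a) ≤ Φ₁ a * m * Ψ c₁ :=
    calc Φ₂ (b * a) = Ψ (Φ₁ (b * a)) := by rw [hΨ _ (Φ₁.nonneg _), Φ₁.yInv_map hba]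
      _ ≤ Ψ ((Φ₁ a * m) * c₁) := Ψ.map_le_map (Φ₁.nonneg _) (by linarith)
      _ ≤ Φ₁ a * m * Ψ c₁ := Ψ.map_mul_le_of_le_one (mul_nonneg (Φ₁.nonneg a) hm.le) hmod c₁
  calc Φ₂ a = Φ₂ (1 / b * (b * a)) := by field_simp
    _ ≤ c₂ * Φ₂ (1 / b) * Φ₂ (b * a) := hΔ₂.2 _ _ (by positivity) hba
    _ ≤ c₂ * Φ₂ (1 / b) * (Φ₁ a * m * Ψ c₁) :=
        mul_le_mul_of_nonneg_left hΦ₂ba (mul_nonneg hΔ₂.1.le (Φ₂.nonneg _))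
    _ = c₂ * Ψ c₁ * Φ₂ (1 / b) * (Φ₁ a * m) := by ring

lemma mul_map_div_le_of_deltaPrime_of_comp (hΔ₁ : YoungDeltaPrime Φ₁ c₁)
    (hΔ₂ : YoungDeltaPrime Φ₂ c₂) (hΨ : ∀ x, 0 ≤ x → Ψ x = Φ₂ (yInv Φ₁ x)) {a m c M K : ℝ}
    (ha : 0 ≤ a) (hm : 0 < m) (hc : 0 ≤ c) (hmod : Φ₁ a * m ≤ 1)
    (hM : Φ₂ (1 / yInv Φ₁ m) * c * m ≤ M) (hK₁ : 1 ≤ K) (hK : c₂ * Ψ c₁ * M ≤ K) :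
    c * Φ₂ (a / K) ≤ Φ₁ a := by
  have hK₀ : 0 < K := zero_lt_one.trans_le hK₁
  have hdiv : Φ₂ (a / K) ≤ Φ₂ a / K := by
    simpa only [div_eq_inv_mul] using
      Φ₂.map_mul_le_of_le_one (inv_nonneg.2 hK₀.le) (inv_le_one_of_one_le₀ hK₁) a
  have hconst : c₂ * Ψ c₁ * (Φ₂ (1 / yInv Φ₁ m) * c * m) ≤ K :=
    (mul_le_mul_of_nonneg_left hM (mul_nonneg hΔ₂.1.le (Ψ.nonneg _))).trans hK
  calc c * Φ₂ (a / K) ≤ c * (Φ₂ a / K) := mul_le_mul_of_nonneg_left hdiv hc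
    _ ≤ c * (c₂ * Ψ c₁ * Φ₂ (1 / yInv Φ₁ m) * (Φ₁ a * m) / K) := by
        gcongr
        exact map_le_of_deltaPrime_of_comp hΔ₁ hΔ₂ hΨ ha hm hmod
    _ = c₂ * Ψ c₁ * (Φ₂ (1 / yInv Φ₁ m) * c * m) * Φ₁ a / K := by ring
    _ ≤ K * Φ₁ a / K := by gcongr; exact Φ₁.nonneg a
    _ = Φ₁ a := by field_simp

end DeltaPrime

lemma lintegral_comp_div_le_one {μ : Measure X} {A : ℕ → Set X} {B : Set X}
    (hdec : AtomicDecomposition μ A B) {Φ₁ Φ₂ Ψ : YoungFunction} {c₁ c₂ : ℝ}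
    (hΔ₁ : YoungDeltaPrime Φ₁ c₁) (hΔ₂ : YoungDeltaPrime Φ₂ c₂)
    (hΨ : ∀ x, 0 ≤ x → Ψ x = Φ₂ (yInv Φ₁ x)) {T : X → X} (hT : Measurable T) {f₀ : X → ℝ}
    (hmap : μ.map T = μ.withDensity fun x => ENNReal.ofReal (f₀ x)) (hf₀m : Measurable f₀)
    (hf₀nn : ∀ x, 0 ≤ f₀ x) {c₀ : ℕ → ℝ} (hc₀ : ∀ n, ∀ᵐ x ∂μ.restrict (A n), f₀ x = c₀ n)
    (hB : ∀ᵐ x ∂μ.restrict B, f₀ x = 0) {M K : ℝ}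
    (hM : ∀ n, Φ₂ (1 / yInv Φ₁ (μ (A n)).toReal) * c₀ n * (μ (A n)).toReal ≤ M)
    (hK₁ : 1 ≤ K) (hK : c₂ * Ψ c₁ * M ≤ K) {g : X → ℝ} (hg : Measurable g)
    (hg₁ : ∫⁻ x, ENNReal.ofReal (Φ₁ (g x)) ∂μ ≤ 1) :
    ∫⁻ x, ENNReal.ofReal (Φ₂ (g (T x) / K)) ∂μ ≤ 1 := by
  have ⟨hatom, hfin, _⟩ := hdec
  have hA₀ : ∀ n, μ.restrict (A n) ≠ 0 := fun n =>
    mt Measure.restrict_eq_zero.mp (hatom n).2.1.ne'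
  choose a ha using fun n => (hatom n).exists_ae_eq_const (hfin n).ne hg.abs
  have ha₀ : ∀ n, 0 ≤ a n := fun n =>
    nonneg_of_ae_eq_const (hA₀ n) (ae_of_all _ fun x => abs_nonneg _) (ha n)
  have hc₀nn : ∀ n, 0 ≤ c₀ n := fun n =>
    nonneg_of_ae_eq_const (hA₀ n) (ae_of_all _ hf₀nn) (hc₀ n)
  have hΦ₁ : ∀ n, ∀ᵐ x ∂μ.restrict (A n),
      ENNReal.ofReal (Φ₁ (g x)) = ENNReal.ofReal (Φ₁ (a n)) := fun n =>
    (ha n).mono fun x hx => by rw [← Φ₁.map_abs, hx]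
  have hΦ₂ : ∀ n, ∀ᵐ x ∂μ.restrict (A n),
      ENNReal.ofReal (Φ₂ (g x / K)) = ENNReal.ofReal (Φ₂ (a n / K)) := fun n =>
    (ha n).mono fun x hx => by
      rw [← Φ₂.map_abs, abs_div, abs_of_pos (zero_lt_one.trans_le hK₁), hx]
  have hsum : ∑' n, ENNReal.ofReal (Φ₁ (a n)) * μ (A n) ≤ 1 := by
    rw [← hdec.setLIntegral_iUnion_eq_tsum hΦ₁]
    exact (setLIntegral_le_lintegral _ _).trans hg₁
  have hterm : ∀ n, ENNReal.ofReal (c₀ n) * ENNReal.ofReal (Φ₂ (a n / K)) ≤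
      ENNReal.ofReal (Φ₁ (a n)) := by
    intro n
    have hmod : Φ₁ (a n) * (μ (A n)).toReal ≤ 1 := by
      have := (ENNReal.le_tsum n).trans hsum
      rwa [← ENNReal.ofReal_toReal (hfin n).ne, ← ENNReal.ofReal_mul (Φ₁.nonneg _),
        ENNReal.ofReal_le_one] at this
    rw [← ENNReal.ofReal_mul (hc₀nn n)]
    exact ENNReal.ofReal_le_ofReal <| mul_map_div_le_of_deltaPrime_of_comp hΔ₁ hΔ₂ hΨ (ha₀ n)
      (ENNReal.toReal_pos (hatom n).2.1.ne' (hfin n).ne) (hc₀nn n) hmod (hM n) hK₁ hK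
  have hF : Measurable fun x => ENNReal.ofReal (Φ₂ (g x / K)) :=
    (Φ₂.continuous'.measurable.comp (hg.div_const K)).ennreal_ofReal
  rw [hdec.lintegral_comp_eq_tsum hT hmap hf₀m hc₀ hB hF hΦ₂]
  exact (ENNReal.tsum_le_tsum fun n => mul_le_mul_of_nonneg_right (hterm n) zero_le).trans hsum

section Orlicz

variable {Φ : YoungFunction} {μ : Measure X} {f g : X → ℝ}

lemma memOrlicz_congr_ae (h : f =ᵐ[μ] g) : MemOrlicz Φ μ f ↔ MemOrlicz Φ μ g := by
  refine and_congr (aestronglyMeasurable_congr h)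
    (exists_congr fun _ => and_congr_right fun _ => ?_)
  exact integrable_congr (h.mono fun x hx => by simp only [hx])

lemma luxNorm_congr_ae (h : f =ᵐ[μ] g) : luxNorm Φ μ f = luxNorm Φ μ g := by
  have hint : ∀ k, ∫ x, Φ (f x / k) ∂μ = ∫ x, Φ (g x / k) ∂μ := fun k =>
    integral_congr_ae (h.mono fun x hx => by simp only [hx])
  simp only [luxNorm, hint]

lemma MemOrlicz.integrable_map_mul {c : ℝ} (hΔ : YoungDeltaPrime Φ c) (hf : MemOrlicz Φ μ f)
    (l : ℝ) : Integrable (fun x => Φ (l * f x)) μ := by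
  obtain ⟨hfm, k, hk, hint⟩ := hf
  refine (hint.const_mul (c * Φ (|l| / k))).mono'
    (Φ.continuous'.comp_aestronglyMeasurable (hfm.const_mul l)) (ae_of_all _ fun x => ?_)
  rw [Real.norm_eq_abs, abs_of_nonneg (Φ.nonneg _)]
  calc Φ (l * f x) = Φ (|l| / k * |k * f x|) := by
        rw [← Φ.map_abs, abs_mul, abs_mul, abs_of_pos hk]
        field_simp
    _ ≤ c * Φ (|l| / k) * Φ |k * f x| := hΔ.2 _ _ (by positivity) (abs_nonneg _)
    _ = c * Φ (|l| / k) * Φ (k * f x) := by rw [Φ.map_abs]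

lemma MemOrlicz.exists_integral_div_le_one (hf : MemOrlicz Φ μ f) :
    ∃ k, 0 < k ∧ ∫ x, Φ (f x / k) ∂μ ≤ 1 := by
  obtain ⟨-, k, hk, hint⟩ := hf
  set s := max 1 (∫ x, Φ (k * f x) ∂μ)
  have hs : 0 < s := zero_lt_one.trans_le (le_max_left _ _)
  have hbound : ∀ x, Φ (f x / (s / k)) ≤ s⁻¹ * Φ (k * f x) := fun x => by
    rw [show f x / (s / k) = s⁻¹ * (k * f x) by field_simp]
    exact Φ.map_mul_le_of_le_one (inv_nonneg.2 hs.le) (inv_le_one_of_one_le₀ (le_max_left _ _)) _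
  refine ⟨s / k, div_pos hs hk, ?_⟩
  calc ∫ x, Φ (f x / (s / k)) ∂μ ≤ ∫ x, s⁻¹ * Φ (k * f x) ∂μ :=
        integral_mono_of_nonneg (ae_of_all _ fun x => Φ.nonneg _) (hint.const_mul _)
          (ae_of_all _ hbound)
    _ = s⁻¹ * ∫ x, Φ (k * f x) ∂μ := integral_const_mul _ _
    _ ≤ 1 := by
        rw [inv_mul_le_iff₀ hs, mul_one]
        exact le_max_right _ _

end Orlicz

lemma luxNorm_le_mul_of_forall {Φ₁ Φ₂ : YoungFunction} {μ ν : Measure X} {f g : X → ℝ} {K : ℝ}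
    (hK : 0 < K) (hf : ∃ k, 0 < k ∧ ∫ x, Φ₁ (f x / k) ∂μ ≤ 1)
    (h : ∀ k, 0 < k → ∫ x, Φ₁ (f x / k) ∂μ ≤ 1 → ∫ x, Φ₂ (g x / (K * k)) ∂ν ≤ 1) :
    luxNorm Φ₂ ν g ≤ K * luxNorm Φ₁ μ f := by
  rw [← div_le_iff₀' hK]
  refine le_csInf hf fun k ⟨hk, hle⟩ => ?_
  rw [div_le_iff₀' hK]
  exact csInf_le ⟨0, fun _ h => h.1.le⟩ ⟨by positivity, h k hk hle⟩

lemma integrable_and_integral_le_one_of_lintegral_le_one {μ : Measure X} {F : X → ℝ}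
    (hF : AEStronglyMeasurable F μ) (hnn : ∀ x, 0 ≤ F x)
    (h : ∫⁻ x, ENNReal.ofReal (F x) ∂μ ≤ 1) : Integrable F μ ∧ ∫ x, F x ∂μ ≤ 1 := by
  refine ⟨⟨hF, (hasFiniteIntegral_iff_ofReal (ae_of_all _ hnn)).mpr
    (h.trans_lt ENNReal.one_lt_top)⟩, ?_⟩
  rw [integral_eq_lintegral_of_nonneg_ae (ae_of_all _ hnn) hF]
  exact ENNReal.toReal_le_of_le_ofReal zero_le_one (h.trans ENNReal.ofReal_one.ge)

lemma orliczBounded_comp_of_lintegral_le_one {Φ₁ Φ₂ : YoungFunction} {c₁ K : ℝ}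
    (hΔ₁ : YoungDeltaPrime Φ₁ c₁) {μ : Measure X} {T : X → X}
    (hT : Measure.QuasiMeasurePreserving T μ μ) (hK : 0 < K)
    (hmod : ∀ g : X → ℝ, Measurable g → ∫⁻ x, ENNReal.ofReal (Φ₁ (g x)) ∂μ ≤ 1 →
      ∫⁻ x, ENNReal.ofReal (Φ₂ (g (T x) / K)) ∂μ ≤ 1) :
    OrliczBounded Φ₁ Φ₂ μ (fun f x => f (T x)) := by
  refine ⟨K, hK, fun f hf => ?_⟩
  obtain ⟨f', hf'm, hff'⟩ := hf.1.aemeasurable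
  have hcomp : (fun x => f (T x)) =ᵐ[μ] fun x => f' (T x) := hT.ae_eq_comp hff'
  rw [memOrlicz_congr_ae hff'] at hf
  rw [memOrlicz_congr_ae hcomp, luxNorm_congr_ae hcomp, luxNorm_congr_ae hff']
  have hscale : ∀ k, 0 < k → ∫ x, Φ₁ (f' x / k) ∂μ ≤ 1 →
      Integrable (fun x => Φ₂ (f' (T x) / (K * k))) μ ∧
        ∫ x, Φ₂ (f' (T x) / (K * k)) ∂μ ≤ 1 := by
    intro k hk hle
    -- `luxNorm` is defined through the Bochner integral, which vanishes off integrability;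
    -- `Δ'` makes every scale of `f'` integrable.
    have hint : Integrable (fun x => Φ₁ (f' x / k)) μ := by
      simpa only [div_eq_inv_mul] using hf.integrable_map_mul hΔ₁ k⁻¹
    have hmodk := hmod (fun x => f' x / k) (hf'm.div_const k) <| by
      rw [← ofReal_integral_eq_lintegral_ofReal hint (ae_of_all _ fun x => Φ₁.nonneg _)]
      exact ENNReal.ofReal_le_one.mpr hle
    simp only [div_div, mul_comm k K] at hmodk
    exact integrable_and_integral_le_one_of_lintegral_le_one
      (Φ₂.continuous'.measurable.comp ((hf'm.comp hT.measurable).div_const _)).aestronglyMeasurable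
      (fun x => Φ₂.nonneg _) hmodk
  obtain ⟨k₁, hk₁, hk₁le⟩ := hf.exists_integral_div_le_one
  refine ⟨⟨(hf'm.comp hT.measurable).aestronglyMeasurable, (K * k₁)⁻¹, by positivity, ?_⟩,
    luxNorm_le_mul_of_forall hK ⟨k₁, hk₁, hk₁le⟩ fun k hk hle => (hscale k hk hle).2⟩
  simpa only [inv_mul_eq_div] using (hscale k₁ hk₁ hk₁le).1

theorem composition_bounded_sufficient_general
    {X : Type*} [MeasurableSpace X] (μ : Measure X)
    (A : ℕ → Set X) (B : Set X) (hdec : AtomicDecomposition μ A B)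
    (Φ₁ Φ₂ : YoungFunction) (c₁ c₂ : ℝ)
    (hΔ₁ : YoungDeltaPrime Φ₁ c₁) (hΔ₂ : YoungDeltaPrime Φ₂ c₂)
    (hcomp : ∃ Ψ : YoungFunction, ∀ x : ℝ, 0 ≤ x → Ψ x = Φ₂ (yInv Φ₁ x))
    (T : X → X) (hT : Measurable T)
    (f₀ : X → ℝ) (hf₀m : Measurable f₀) (hf₀nn : ∀ x, 0 ≤ f₀ x)
    (hf₀ : ∀ S : Set X, MeasurableSet S →
      μ.map T S = ∫⁻ x in S, ENNReal.ofReal (f₀ x) ∂μ)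
    (c₀ : ℕ → ℝ) (hc₀ : ∀ n, ∀ᵐ x ∂μ.restrict (A n), f₀ x = c₀ n)
    (hB : ∀ᵐ x ∂μ.restrict B, f₀ x = 0)
    (hsup : ∃ M : ℝ, ∀ n,
      Φ₂ (1 / yInv Φ₁ (μ (A n)).toReal) * c₀ n * (μ (A n)).toReal ≤ M) :
    OrliczBounded Φ₁ Φ₂ μ (fun f x => f (T x)) := by
  obtain ⟨Ψ, hΨ⟩ := hcomp
  obtain ⟨M, hM⟩ := hsup
  have hmap : μ.map T = μ.withDensity fun x => ENNReal.ofReal (f₀ x) :=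
    Measure.ext fun S hS => by rw [hf₀ S hS, withDensity_apply _ hS]
  have hqmp : Measure.QuasiMeasurePreserving T μ μ :=
    ⟨hT, hmap ▸ withDensity_absolutelyContinuous _ _⟩
  exact orliczBounded_comp_of_lintegral_le_one hΔ₁ hqmp (K := max (c₂ * Ψ c₁ * M) 1)
    (by positivity) fun g hg hg₁ => lintegral_comp_div_le_one hdec hΔ₁ hΔ₂ hΨ hT hmap hf₀m
      hf₀nn hc₀ hB hM (le_max_right _ _) (le_max_left _ _) hg hg₁

/-- sufficient conditions for boundedness of the composition operator
when `Φ₁, Φ₂ ∈ Δ'` and `Φ₂ ∘ Φ₁⁻¹` is a Young function. -/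
theorem composition_bounded_sufficient
    {X : Type*} [MeasurableSpace X] (μ : Measure X) [SigmaFinite μ]
    (A : ℕ → Set X) (B : Set X) (hdec : AtomicDecomposition μ A B)
    (Φ₁ Φ₂ : YoungFunction) (c₁ c₂ : ℝ)
    (hΔ₁ : YoungDeltaPrime Φ₁ c₁) (hΔ₂ : YoungDeltaPrime Φ₂ c₂)
    (hcomp : ∃ Ψ : YoungFunction, ∀ x : ℝ, 0 ≤ x → Ψ x = Φ₂ (yInv Φ₁ x))
    (T : X → X) (hT : Measurable T) (hns : μ.map T ≪ μ)
    (f₀ : X → ℝ) (hf₀m : Measurable f₀) (hf₀nn : ∀ x, 0 ≤ f₀ x)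
    (hf₀ : ∀ S : Set X, MeasurableSet S →
      μ.map T S = ∫⁻ x in S, ENNReal.ofReal (f₀ x) ∂μ)
    (c₀ : ℕ → ℝ) (hc₀ : ∀ n, ∀ᵐ x ∂μ.restrict (A n), f₀ x = c₀ n)
    (hB : ∀ᵐ x ∂μ.restrict B, f₀ x = 0)
    (hsup : ∃ M : ℝ, ∀ n,
      Φ₂ (1 / yInv Φ₁ (μ (A n)).toReal) * c₀ n * (μ (A n)).toReal ≤ M) :
    OrliczBounded Φ₁ Φ₂ μ (fun f x => f (T x)) :=
  composition_bounded_sufficient_general μ A B hdec Φ₁ Φ₂ c₁ c₂ hΔ₁ hΔ₂ hcomp T hT f₀ hf₀m hf₀nn hf₀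
    c₀ hc₀ hB hsup
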